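/- Let s ∈ V₁⊗V₂⊗V₃ and t ∈ W₁⊗W₂⊗W₃ be tensors over ℂ, and let F₁: V₁⊗V₂⊗V₃ → V′₁⊗V′₂ and F₂: W₁⊗W₂⊗W₃ → W′₁⊗W′₂ be linear maps. Then borderrank(s ⊗ t) ≥ [rank(F₁(s)) / max rank(F₁(v₁⊗v₂⊗v₃))] · [rank(F₂(t)) / max rank(F₂(w₁⊗w₂⊗w₃))], where the maxima are over simple tensors and rank denotes matrix rank; i.e., generalised flattening lower bounds on border rank are multiplicative under tensor product. -/

import Mathlib

/-!
If a linear map `G` from tensors to matrices has rank at most `M` on simple tensors, subadditivity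
of matrix rank gives `rank (G T) ≤ tRank T * M`, and since `{A | rank A ≤ r}` is closed this
passes to limits: `rank (G T) ≤ tBorderRank T * M`. Take for `G` the Kronecker product `F₁ ⊠ F₂`
of the two flattenings: it maps `s ⊗ t` to `F₁ s ⊗ₖ F₂ t` and a simple 6-tensor to a Kronecker
product of images of simple 3-tensors, so multiplicativity of rank under `⊗ₖ` gives
`rank (F₁ s) * rank (F₂ t) ≤ tBorderRank (s ⊗ t) * M₁ * M₂`.
-/

open scoped BigOperators

universe u v

noncomputable section

variable {F : Type v}

/-- Tensor rank: the least `r` such that `T` is a sum of `r` simple tensors. -/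
def tRank {ι : Type*} [Fintype ι] [DecidableEq ι] {γ : ι → Type*} [∀ i, Fintype (γ i)]
    [Field F] (T : (∀ i, γ i) → F) : ℕ :=
  sInf {r | ∃ v : Fin r → ∀ i, γ i → F, ∀ x, T x = ∑ j, ∏ i, v j i (x i)}

/-- Tensor product of a `ι`-indexed tensor and a `κ`-indexed tensor (no grouping). -/
def tProd [Field F] {ι κ : Type*} {γ : ι → Type u} {δ : κ → Type u}
    (S : (∀ i, γ i) → F) (T : (∀ j, δ j) → F) : (∀ i : ι ⊕ κ, Sum.elim γ δ i) → F :=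
  fun x => S (fun i => x (Sum.inl i)) * T (fun j => x (Sum.inr j))

instance sumElimFintype {ι κ : Type*} {γ : ι → Type u} {δ : κ → Type u}
    [hγ : ∀ i, Fintype (γ i)] [hδ : ∀ j, Fintype (δ j)] :
    ∀ i : ι ⊕ κ, Fintype (Sum.elim γ δ i)
  | Sum.inl i => hγ i
  | Sum.inr j => hδ j

/-- Tensor Kronecker product of two tensors with the same index set. -/
def tKron [Field F] {ι : Type*} {γ δ : ι → Type*}
    (S : (∀ i, γ i) → F) (T : (∀ i, δ i) → F) : (∀ i, γ i × δ i) → F :=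
  fun x => S (fun i => (x i).1) * T (fun i => (x i).2)

/-- `n`-fold tensor product power of a tensor (no grouping), a tensor indexed by `Fin n × ι`. -/
def tPow [Field F] {ι : Type*} {γ : ι → Type*} (T : (∀ i, γ i) → F) (n : ℕ) :
    (∀ p : Fin n × ι, γ p.2) → F :=
  fun x => ∏ j : Fin n, T (fun i => x (j, i))

/-- Restriction `t ≥ s`: `s` is obtained from `t` by applying linear maps on each factor. -/
def Restricts [Field F] {ι : Type*} [Fintype ι] [DecidableEq ι]
    {γ : ι → Type*} {δ : ι → Type*} [∀ i, Fintype (γ i)]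
    (t : (∀ i, γ i) → F) (s : (∀ i, δ i) → F) : Prop :=
  ∃ A : ∀ i, δ i → γ i → F, ∀ x, (∑ y : ∀ i, γ i, (∏ i, A i (x i) (y i)) * t y) = s x

/-- Degeneration `t ⊵_d^e s` with approximation degree `d` and error degree `e`. -/
def Degen [Field F] {ι : Type*} [Fintype ι] [DecidableEq ι]
    {γ : ι → Type*} {δ : ι → Type*} [∀ i, Fintype (γ i)]
    (t : (∀ i, γ i) → F) (s : (∀ i, δ i) → F) (d e : ℕ) : Prop :=
  ∃ A : ∀ i, δ i → γ i → Polynomial F, ∃ s' : Fin e → ((∀ i, δ i) → F),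
    ∀ x, (∑ y : ∀ i, γ i, (∏ i, A i (x i) (y i)) * Polynomial.C (t y)) =
      Polynomial.C (s x) * Polynomial.X ^ d +
      ∑ j : Fin e, Polynomial.C (s' j x) * Polynomial.X ^ (d + 1 + (j : ℕ))

/-- The rank-`r` order-`k` unit tensor `⟨r⟩_k = ∑_j b_j^{⊗k}`. -/
def unitTensor (F : Type v) [Field F] (r k : ℕ) : (Fin k → Fin r) → F :=
  fun x => ∑ j : Fin r, ∏ i : Fin k, if x i = j then 1 else 0

/-- The tensor `W_k = ∑_{type(i)=(k-1,1)} b_{i₁} ⊗ ⋯ ⊗ b_{i_k}` in `(F²)^{⊗k}`. -/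
def Wtensor (F : Type v) [Field F] (k : ℕ) : (Fin k → Fin 2) → F :=
  fun x => if (∑ i, (x i : ℕ)) = 1 then 1 else 0

/-- `R^e(s)`: border rank with error degree at most `e`. -/
def errRank [Field F] {k : ℕ} {γ : Fin k → Type*} [∀ i, Fintype (γ i)]
    (e : ℕ) (s : (∀ i, γ i) → F) : ℕ :=
  sInf {r | ∃ d, Degen (unitTensor F r k) s d e}

/-- `R_d(s)`: border rank with approximation degree `d`. -/
def degRank [Field F] {k : ℕ} {γ : Fin k → Type*} [∀ i, Fintype (γ i)]
    (d : ℕ) (s : (∀ i, γ i) → F) : ℕ :=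
  sInf {r | ∃ e, Degen (unitTensor F r k) s d e}

/-- Border rank over ℂ: the least `r` such that `T` is a limit of tensors of rank `≤ r`. -/
def tBorderRank {ι : Type*} [Fintype ι] [DecidableEq ι] {γ : ι → Type*} [∀ i, Fintype (γ i)]
    (T : (∀ i, γ i) → ℂ) : ℕ :=
  sInf {r | T ∈ closure {T' : (∀ i, γ i) → ℂ | tRank T' ≤ r}}

end

open Module TensorProduct Matrix
open scoped Kronecker

theorem TensorProduct.finrank_range_map {K V W V' W' : Type*} [Field K]
    [AddCommGroup V] [Module K V] [AddCommGroup W] [Module K W]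
    [AddCommGroup V'] [Module K V'] [AddCommGroup W'] [Module K W']
    [FiniteDimensional K V'] [FiniteDimensional K W'] (f : V →ₗ[K] V') (g : W →ₗ[K] W') :
    finrank K (LinearMap.range (map f g)) =
      finrank K (LinearMap.range f) * finrank K (LinearMap.range g) := by
  have hrange : LinearMap.range (map f g) =
      LinearMap.range (mapIncl (LinearMap.range f) (LinearMap.range g)) := by
    rw [range_map, range_mapIncl]
  rw [hrange, LinearMap.finrank_range_of_inj
    (Module.Flat.tensorProduct_mapIncl_injective_of_left _ _), finrank_tensorProduct]

namespace Matrix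

variable {K : Type*} [Field K] {m n p q : Type*} [Fintype n]

theorem rank_kronecker [Fintype m] [Fintype p] [Fintype q] [DecidableEq n] [DecidableEq q]
    (A : Matrix m n K) (B : Matrix p q K) : (A ⊗ₖ B).rank = A.rank * B.rank := by
  rw [rank_eq_finrank_range_toLin (A ⊗ₖ B) ((Pi.basisFun K m).tensorProduct (Pi.basisFun K p))
    ((Pi.basisFun K n).tensorProduct (Pi.basisFun K q)), toLin_kronecker,
    TensorProduct.finrank_range_map, ← rank_eq_finrank_range_toLin,
    ← rank_eq_finrank_range_toLin]

theorem rank_add_le (A B : Matrix m n K) : (A + B).rank ≤ A.rank + B.rank := by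
  have hrange : LinearMap.range (A + B).mulVecLin ≤
      LinearMap.range A.mulVecLin ⊔ LinearMap.range B.mulVecLin := by
    rw [mulVecLin_add]
    exact LinearMap.range_add_le _ _
  exact (Submodule.finrank_mono hrange).trans
    (Submodule.finrank_add_le_finrank_add_finrank _ _)

theorem rank_sum_le {ι : Type*} (s : Finset ι) (A : ι → Matrix m n K) :
    (∑ i ∈ s, A i).rank ≤ ∑ i ∈ s, (A i).rank :=
  Finset.le_sum_of_subadditive rank (rank_zero (R := K)).le rank_add_le s A

theorem isClosed_setOf_rank_le {𝕜 : Type*} [NontriviallyNormedField 𝕜] [CompleteSpace 𝕜]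
    [Fintype m] [DecidableEq n] (r : ℕ) : IsClosed {A : Matrix m n 𝕜 | A.rank ≤ r} := by
  let toCLM : Matrix m n 𝕜 →ₗ[𝕜] (n → 𝕜) →L[𝕜] m → 𝕜 :=
    LinearMap.toContinuousLinearMap.toLinearMap ∘ₗ toLin'.toLinearMap
  have hrank : ∀ A : Matrix m n 𝕜, LinearMap.rank (toLin' A) = A.rank := fun A => by
    rw [toLin'_apply', rank, LinearMap.rank, finrank_eq_rank]
  have hset : {A : Matrix m n 𝕜 | A.rank ≤ r} =
      toCLM ⁻¹' {f | ((r + 1 : ℕ) : Cardinal) ≤ (f : (n → 𝕜) →ₗ[𝕜] m → 𝕜).rank}ᶜ := by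
    ext A
    simp only [Set.mem_preimage, Set.mem_compl_iff, Set.mem_ofPred_eq, toCLM,
      LinearMap.coe_comp, LinearEquiv.coe_coe, Function.comp_apply,
      LinearMap.coe_toContinuousLinearMap, hrank, Nat.cast_le, not_le, Nat.lt_succ_iff]
  rw [hset]
  exact (isOpen_setOfPred_nat_le_rank (r + 1)).isClosed_compl.preimage
    toCLM.continuous_of_finiteDimensional

end Matrix

section TensorRank

variable {K : Type*} [Field K] {ι : Type*} [Fintype ι] [DecidableEq ι] [Nonempty ι]
  {γ : ι → Type*} [∀ i, Fintype (γ i)]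

theorem exists_eq_sum_prod (T : (∀ i, γ i) → K) :
    ∃ r, ∃ v : Fin r → ∀ i, γ i → K, ∀ x, T x = ∑ j, ∏ i, v j i (x i) := by
  classical
  obtain ⟨i₀⟩ := ‹Nonempty ι›
  let e := (Fintype.equivFin (∀ i, γ i)).symm
  -- `T = ∑ z, T z • δ_z`, the scalar `T z` being absorbed into the factor at `i₀`
  refine ⟨_, fun j i a => (if i = i₀ then T (e j) else 1) * if a = e j i then 1 else 0,
    fun x => ?_⟩
  simp only [Finset.prod_mul_distrib, Finset.prod_ite_eq', Finset.mem_univ, if_true,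
    Finset.prod_boole, forall_const, ← funext_iff]
  rw [e.sum_comp fun z => T z * if x = z then 1 else 0]
  simp

theorem exists_eq_sum_prod_fin_tRank (T : (∀ i, γ i) → K) :
    ∃ v : Fin (tRank T) → ∀ i, γ i → K, ∀ x, T x = ∑ j, ∏ i, v j i (x i) :=
  Nat.sInf_mem (exists_eq_sum_prod T)

variable {α β : Type*} [Fintype β]

theorem rank_map_le_tRank_mul (G : ((∀ i, γ i) → K) →ₗ[K] Matrix α β K) {M : ℕ}
    (hM : ∀ v : ∀ i, γ i → K, (G fun x => ∏ i, v i (x i)).rank ≤ M)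
    (T : (∀ i, γ i) → K) : (G T).rank ≤ tRank T * M := by
  obtain ⟨v, hv⟩ := exists_eq_sum_prod_fin_tRank T
  have hT : T = ∑ j, fun x => ∏ i, v j i (x i) := funext fun x => by simp [hv x]
  have hGT : G T = ∑ j, G fun x => ∏ i, v j i (x i) := by
    rw [← map_sum]; exact congrArg G hT
  calc (G T).rank ≤ ∑ j, (G fun x => ∏ i, v j i (x i)).rank := hGT ▸ rank_sum_le _ _
    _ ≤ ∑ _j : Fin (tRank T), M := Finset.sum_le_sum fun j _ => hM (v j)
    _ = tRank T * M := by simp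

theorem rank_map_le_tBorderRank_mul [Fintype α] [DecidableEq β]
    (G : ((∀ i, γ i) → ℂ) →ₗ[ℂ] Matrix α β ℂ) {M : ℕ}
    (hM : ∀ v : ∀ i, γ i → ℂ, (G fun x => ∏ i, v i (x i)).rank ≤ M)
    (T : (∀ i, γ i) → ℂ) : (G T).rank ≤ tBorderRank T * M := by
  have hT : T ∈ closure {T' | tRank T' ≤ tBorderRank T} :=
    Nat.sInf_mem (s := {r | T ∈ closure {T' | tRank T' ≤ r}})
      ⟨tRank T, subset_closure (le_refl (tRank T))⟩
  refine closure_minimal (fun T' hT' => ?_)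
    ((isClosed_setOf_rank_le _).preimage G.continuous_of_finiteDimensional) hT
  exact (rank_map_le_tRank_mul G hM T').trans (Nat.mul_le_mul_right _ hT')

end TensorRank

theorem rank_le_sSup_rank_prod {K ι α β : Type*} [Field K] [Fintype ι] {γ : ι → Type*}
    [Fintype α] [Fintype β] (G : ((∀ i, γ i) → K) →ₗ[K] Matrix α β K) (v : ∀ i, γ i → K) :
    (G fun x => ∏ i, v i (x i)).rank ≤
      sSup {m | ∃ v : ∀ i, γ i → K, (G fun x => ∏ i, v i (x i)).rank = m} :=
  le_csSup ⟨Fintype.card α, by rintro _ ⟨w, rfl⟩; exact rank_le_card_height _⟩ ⟨v, rfl⟩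

section KroneckerFlattening

variable {K X Y α₁ β₁ α₂ β₂ : Type*} [Field K] [Fintype X] [Fintype Y] [DecidableEq X]
  [DecidableEq Y]

def kroneckerFlattening (F₁ : (X → K) →ₗ[K] Matrix α₁ β₁ K)
    (F₂ : (Y → K) →ₗ[K] Matrix α₂ β₂ K) : (X × Y → K) →ₗ[K] Matrix (α₁ × α₂) (β₁ × β₂) K :=
  Fintype.linearCombination K fun z =>
    F₁ (fun x => if z.1 = x then 1 else 0) ⊗ₖ F₂ (fun y => if z.2 = y then 1 else 0)

theorem kroneckerFlattening_apply_mul (F₁ : (X → K) →ₗ[K] Matrix α₁ β₁ K)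
    (F₂ : (Y → K) →ₗ[K] Matrix α₂ β₂ K) (S : X → K) (T : Y → K) :
    kroneckerFlattening F₁ F₂ (fun z => S z.1 * T z.2) = F₁ S ⊗ₖ F₂ T := by
  have hbilinear : ∀ (A : Matrix α₁ β₁ K) (B : Matrix α₂ β₂ K),
      A ⊗ₖ B = kroneckerBilinear (R := K) A B := fun _ _ => rfl
  rw [kroneckerFlattening, Fintype.linearCombination_apply, Fintype.sum_prod_type,
    F₁.pi_apply_eq_sum_univ S, F₂.pi_apply_eq_sum_univ T]
  simp only [hbilinear, map_sum, map_smul, LinearMap.sum_apply, LinearMap.smul_apply,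
    Finset.smul_sum, smul_smul]
  rw [Finset.sum_comm]
  simp_rw [mul_comm (T _)]

end KroneckerFlattening

theorem flattening_lower_bound_mult_general {γ δ : Fin 3 → Type u}
    [∀ i, Fintype (γ i)] [∀ i, Fintype (δ i)]
    {α₁ β₁ α₂ β₂ : Type*} [Fintype α₁] [Fintype β₁] [Fintype α₂] [Fintype β₂]
    (s : (∀ i, γ i) → ℂ) (t : (∀ i, δ i) → ℂ)
    (F₁ : ((∀ i, γ i) → ℂ) →ₗ[ℂ] Matrix α₁ β₁ ℂ)
    (F₂ : ((∀ i, δ i) → ℂ) →ₗ[ℂ] Matrix α₂ β₂ ℂ) :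
    ((Matrix.rank (F₁ s) : ℝ) /
        (↑(sSup {m : ℕ | ∃ v : ∀ i, γ i → ℂ,
            Matrix.rank (F₁ (fun x => ∏ i, v i (x i))) = m}) : ℝ)) *
    ((Matrix.rank (F₂ t) : ℝ) /
        (↑(sSup {m : ℕ | ∃ w : ∀ i, δ i → ℂ,
            Matrix.rank (F₂ (fun x => ∏ i, w i (x i))) = m}) : ℝ))
      ≤ (tBorderRank (tProd s t) : ℝ) := by
  classical
  let G := kroneckerFlattening F₁ F₂ ∘ₗ
    LinearMap.funLeft ℂ ℂ (Equiv.sumPiEquivProdPi (Sum.elim γ δ)).symm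
  have hG : ∀ S T, G (tProd S T) = F₁ S ⊗ₖ F₂ T := kroneckerFlattening_apply_mul F₁ F₂
  have hsimple : ∀ v : ∀ i, Sum.elim γ δ i → ℂ, (G fun x => ∏ i, v i (x i)).rank ≤
      sSup {m | ∃ v : ∀ i, γ i → ℂ, (F₁ fun x => ∏ i, v i (x i)).rank = m} *
      sSup {m | ∃ w : ∀ i, δ i → ℂ, (F₂ fun x => ∏ i, w i (x i)).rank = m} := fun v => by
    have hv : (fun x => ∏ i, v i (x i)) = tProd (γ := γ) (δ := δ)
        (fun x => ∏ i, v (.inl i) (x i)) (fun y => ∏ i, v (.inr i) (y i)) :=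
      funext fun x => Fintype.prod_sum_type _
    rw [hv, hG, rank_kronecker]
    exact Nat.mul_le_mul (rank_le_sSup_rank_prod F₁ _) (rank_le_sSup_rank_prod F₂ _)
  have key := rank_map_le_tBorderRank_mul G hsimple (tProd s t)
  rw [hG, rank_kronecker] at key
  -- also covers a vanishing maximum, where the quotient is `x / 0 = 0`
  rw [div_mul_div_comm]
  exact div_le_of_le_mul₀ (by positivity) (by positivity) (by exact_mod_cast key)

/-- generalised flattening lower bounds on border rank are multiplicative
under the tensor product. -/
theorem flattening_lower_bound_mult {γ δ : Fin 3 → Type u}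
    [∀ i, Fintype (γ i)] [∀ i, Fintype (δ i)]
    {α₁ β₁ α₂ β₂ : Type*} [Fintype α₁] [Fintype β₁] [Fintype α₂] [Fintype β₂]
    [DecidableEq α₁] [DecidableEq β₁] [DecidableEq α₂] [DecidableEq β₂]
    (s : (∀ i, γ i) → ℂ) (t : (∀ i, δ i) → ℂ)
    (F₁ : ((∀ i, γ i) → ℂ) →ₗ[ℂ] Matrix α₁ β₁ ℂ)
    (F₂ : ((∀ i, δ i) → ℂ) →ₗ[ℂ] Matrix α₂ β₂ ℂ) :
    ((Matrix.rank (F₁ s) : ℝ) /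
        (↑(sSup {m : ℕ | ∃ v : ∀ i, γ i → ℂ,
            Matrix.rank (F₁ (fun x => ∏ i, v i (x i))) = m}) : ℝ)) *
    ((Matrix.rank (F₂ t) : ℝ) /
        (↑(sSup {m : ℕ | ∃ w : ∀ i, δ i → ℂ,
            Matrix.rank (F₂ (fun x => ∏ i, w i (x i))) = m}) : ℝ))
      ≤ (tBorderRank (tProd s t) : ℝ) :=
  flattening_lower_bound_mult_general s t F₁ F₂
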